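/- arXiv:cs/0403022 — 5 statements merged into one kernel-verified Lean document; each statement's English description precedes it below -/
import Mathlib

section
/- Let K be a field, f ∈ K[X] monic, g ∈ K[X], s a natural number, and let p_0, …, p_{s−1} ∈ (K[X])[Y] be bivariate polynomials. Set p = Σ_{i<s} p_i · Y^{i·s}. Then (Σ_{i<s} ((Polynomial.eval g p_i) %ₘ f) * ((g^s)^i %ₘ f)) %ₘ f = (Polynomial.eval g p) %ₘ f. (This is the correctness of the baby-step/giant-step strategy in the modular composition theorem: composing each block p_i with g, reducing modulo f, multiplying by the reduced giant-step powers (g^s)^i %ₘ f, summing, and reducing again yields p(X,g(X)) mod f.) -/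
open Polynomial

namespace Polynomial

variable {R ι : Type*} [CommRing R]

theorem sum_modByMonic (s : Finset ι) (p : ι → R[X]) (q : R[X]) :
    (∑ i ∈ s, p i) %ₘ q = ∑ i ∈ s, p i %ₘ q :=
  map_sum (modByMonicHom q) p s

theorem sum_mul_modByMonic (s : Finset ι) (a b : ι → R[X]) (q : R[X]) :
    (∑ i ∈ s, (a i %ₘ q) * (b i %ₘ q)) %ₘ q = (∑ i ∈ s, a i * b i) %ₘ q := by
  simp only [sum_modByMonic, ← mul_modByMonic]

end Polynomial

theorem baby_step_giant_step_correct_general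
    {K : Type*} [Field K] (f : K[X]) (g : K[X])
    (s : ℕ) (p : Fin s → Polynomial (Polynomial K))
    (P : Polynomial (Polynomial K))
    (hP : P = ∑ i : Fin s, p i * X ^ ((i : ℕ) * s)) :
    (∑ i : Fin s, ((Polynomial.eval g (p i)) %ₘ f) * ((g ^ s) ^ (i : ℕ) %ₘ f)) %ₘ f
      = (Polynomial.eval g P) %ₘ f := by
  have hP_eval : eval g P = ∑ i : Fin s, eval g (p i) * (g ^ s) ^ (i : ℕ) := by
    simp only [hP, eval_finsetSum, eval_mul, eval_pow, eval_X, ← pow_mul, mul_comm s]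
  rw [sum_mul_modByMonic, hP_eval]

theorem baby_step_giant_step_correct
    {K : Type*} [Field K] (f : K[X]) (hf : f.Monic) (g : K[X])
    (s : ℕ) (p : Fin s → Polynomial (Polynomial K))
    (P : Polynomial (Polynomial K))
    (hP : P = ∑ i : Fin s, p i * X ^ ((i : ℕ) * s)) :
    (∑ i : Fin s, ((Polynomial.eval g (p i)) %ₘ f) * ((g ^ s) ^ (i : ℕ) %ₘ f)) %ₘ f
      = (Polynomial.eval g P) %ₘ f :=
  baby_step_giant_step_correct_general f g s p P hP
end

section
/- Let K be a field, N a natural number, and p : Fin N → K × K an injective family of N planar points, writing x k = (p k).1 and y k = (p k).2. Then the set of 'bad' parameters Bad = {θ ∈ K : the map k ↦ x k + θ · y k is not injective} is finite and has cardinality at most N·(N−1)/2. -/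
/-!
Two distinct points `a ≠ b` collide under the shear `(x, y) ↦ x + θ y` for at most one `θ`,
namely `θ = (b.1 - a.1) / (a.2 - b.2)`: if `a.2 = b.2` a collision forces `a.1 = b.1`.
So every bad parameter is the value of a symmetric function on an unordered pair of distinct
indices, and there are `N.choose 2` such pairs.
-/

theorem Set.finite_and_ncard_le_choose_two_of_subset_offDiag_values {ι β : Type*} [Finite ι]
    {S : Set β} (g : ι → ι → β) (hg : ∀ i j, g i j = g j i)
    (hS : ∀ b ∈ S, ∃ i j, i ≠ j ∧ g i j = b) :
    S.Finite ∧ S.ncard ≤ (Nat.card ι).choose 2 := by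
  let G : {z : Sym2 ι // ¬z.IsDiag} → β := fun z => Sym2.lift ⟨g, hg⟩ z
  have hSG : S ⊆ Set.range G := by
    intro b hb
    obtain ⟨i, j, hij, rfl⟩ := hS b hb
    exact ⟨⟨s(i, j), Sym2.mk_isDiag_iff.not.mpr hij⟩, rfl⟩
  have hG : (Set.range G).Finite := Set.finite_range G
  refine ⟨hG.subset hSG, ?_⟩
  calc S.ncard ≤ (Set.range G).ncard := Set.ncard_le_ncard hSG hG
    _ ≤ Nat.card {z : Sym2 ι // ¬z.IsDiag} := Finite.card_range_le G
    _ = (Nat.card ι).choose 2 := Sym2.natCard_subtype_not_diag ι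

section Shear

variable {K : Type*} [Field K]

def shearCollision (a b : K × K) : K := (b.1 - a.1) / (a.2 - b.2)

theorem shearCollision_comm (a b : K × K) : shearCollision a b = shearCollision b a := by
  rw [shearCollision, shearCollision, ← neg_sub b.1 a.1, ← neg_sub b.2 a.2, div_neg, neg_div]

theorem shearCollision_eq_of_add_mul_eq {a b : K × K} (hab : a ≠ b) {θ : K}
    (h : a.1 + θ * a.2 = b.1 + θ * b.2) : shearCollision a b = θ := by
  have hy : a.2 - b.2 ≠ 0 := by
    intro hy
    have hy : a.2 = b.2 := sub_eq_zero.mp hy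
    exact hab (Prod.ext (by rwa [hy, add_left_inj] at h) hy)
  rw [shearCollision, div_eq_iff hy]
  linear_combination -h

end Shear

theorem bad_shear_parameters_finite_card
    {K : Type*} [Field K] {N : ℕ} (p : Fin N → K × K) (hp : Function.Injective p) :
    (setOf (fun θ : K => ¬ Function.Injective
        (fun k : Fin N => (p k).1 + θ * (p k).2))).Finite ∧
    Set.ncard (setOf (fun θ : K => ¬ Function.Injective
        (fun k : Fin N => (p k).1 + θ * (p k).2))) ≤ N * (N - 1) / 2 := by
  have bad_is_collision : ∀ θ, ¬ Function.Injective (fun k : Fin N => (p k).1 + θ * (p k).2) →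
      ∃ i j, i ≠ j ∧ shearCollision (p i) (p j) = θ := by
    intro θ hθ
    obtain ⟨i, j, hcollide, hij⟩ := Function.not_injective_iff.mp hθ
    exact ⟨i, j, hij, shearCollision_eq_of_add_mul_eq (hp.ne hij) hcollide⟩
  have := Set.finite_and_ncard_le_choose_two_of_subset_offDiag_values
    (fun i j => shearCollision (p i) (p j)) (fun i j => shearCollision_comm _ _) bad_is_collision
  rwa [Nat.card_fin, Nat.choose_two_right] at this
end

section
/- Let K be a finite field (or any finite Fintype field), N ≥ 1 a natural number with N² ≤ #K, and p : Fin N → K × K an injective family of N planar points, writing x k = (p k).1 and y k = (p k).2. Then at least half of the elements of K are good shear parameters: the set Good = {θ ∈ K : the map k ↦ x k + θ · y k is injective} satisfies 2 · (Set.ncard Good) ≥ Fintype.card K. -/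
theorem half_good_shear_parameters
    {K : Type*} [Field K] [Fintype K] {N : ℕ} (hN : 1 ≤ N)
    (hcard : N ^ 2 ≤ Fintype.card K)
    (p : Fin N → K × K) (hp : Function.Injective p) :
    2 * Set.ncard (setOf (fun θ : K => Function.Injective
        (fun k : Fin N => (p k).1 + θ * (p k).2))) ≥ Fintype.card K := by
  classical
  set G : Set K := setOf (fun θ : K => Function.Injective
      (fun k : Fin N => (p k).1 + θ * (p k).2)) with hG
  set B : Set K := Gᶜ with hBdef
  have key : ∀ θ ∈ B, ∃ k l : Fin N, k ≠ l ∧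
      θ = ((p l).1 - (p k).1) / ((p k).2 - (p l).2) := by
    intro θ hθ
    have hθ' : ¬ Function.Injective (fun k : Fin N => (p k).1 + θ * (p k).2) := hθ
    simp only [Function.Injective, not_forall] at hθ'
    obtain ⟨k, l, h, hkl⟩ := hθ'
    refine ⟨k, l, hkl, ?_⟩
    have hy : (p k).2 ≠ (p l).2 := by
      intro hy
      apply hkl
      apply hp
      have hx : (p k).1 = (p l).1 := by linear_combination h - θ * hy
      exact Prod.ext hx hy
    rw [eq_div_iff (sub_ne_zero.mpr hy)]
    linear_combination h
  set F : Fin N × Fin N → K := fun q => ((p q.2).1 - (p q.1).1) / ((p q.1).2 - (p q.2).2)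
    with hF
  have hFsymm : ∀ k l : Fin N, F (k, l) = F (l, k) := by
    intro k l
    simp only [hF]
    rw [← neg_div_neg_eq]
    ring_nf
  set S₁ : Finset (Fin N × Fin N) := Finset.univ.filter (fun q => q.1 < q.2) with hS1
  set S₂ : Finset (Fin N × Fin N) := Finset.univ.filter (fun q => q.2 < q.1) with hS2
  have hB1 : B ⊆ ↑(S₁.image F) := by
    intro θ hθ
    obtain ⟨k, l, hkl, hθeq⟩ := key θ hθ
    rcases lt_or_gt_of_ne hkl with hlt | hgt
    · simp only [Finset.coe_image, Set.mem_image, Finset.mem_coe]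
      exact ⟨(k, l), by simp [hS1, hlt], hθeq.symm⟩
    · simp only [Finset.coe_image, Set.mem_image, Finset.mem_coe]
      exact ⟨(l, k), by simp [hS1, hgt], by rw [hFsymm]; exact hθeq.symm⟩
  have hB2 : B ⊆ ↑(S₂.image F) := by
    intro θ hθ
    obtain ⟨k, l, hkl, hθeq⟩ := key θ hθ
    rcases lt_or_gt_of_ne hkl with hlt | hgt
    · simp only [Finset.coe_image, Set.mem_image, Finset.mem_coe]
      exact ⟨(l, k), by simp [hS2, hlt], by rw [hFsymm]; exact hθeq.symm⟩
    · simp only [Finset.coe_image, Set.mem_image, Finset.mem_coe]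
      exact ⟨(k, l), by simp [hS2, hgt], hθeq.symm⟩
  have hb1 : B.ncard ≤ S₁.card := by
    calc B.ncard ≤ (↑(S₁.image F) : Set K).ncard :=
          Set.ncard_le_ncard hB1 (Finset.finite_toSet _)
      _ = (S₁.image F).card := Set.ncard_coe_finset _
      _ ≤ S₁.card := Finset.card_image_le
  have hb2 : B.ncard ≤ S₂.card := by
    calc B.ncard ≤ (↑(S₂.image F) : Set K).ncard :=
          Set.ncard_le_ncard hB2 (Finset.finite_toSet _)
      _ = (S₂.image F).card := Set.ncard_coe_finset _
      _ ≤ S₂.card := Finset.card_image_le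
  have hdisj : Disjoint S₁ S₂ := by
    rw [Finset.disjoint_left]
    intro q hq1 hq2
    simp only [hS1, Finset.mem_filter] at hq1
    simp only [hS2, Finset.mem_filter] at hq2
    exact absurd hq2.2 (not_lt.mpr hq1.2.le)
  have hsub : S₁ ∪ S₂ ⊆ (Finset.univ : Finset (Fin N)).offDiag := by
    intro q hq
    simp only [Finset.mem_union, hS1, hS2, Finset.mem_filter] at hq
    rw [Finset.mem_offDiag]
    rcases hq with h | h
    · exact ⟨Finset.mem_univ _, Finset.mem_univ _, ne_of_lt h.2⟩
    · exact ⟨Finset.mem_univ _, Finset.mem_univ _, (ne_of_lt h.2).symm⟩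
  have hcards : S₁.card + S₂.card ≤ N * N - N := by
    have := Finset.card_le_card hsub
    rw [Finset.card_union_of_disjoint hdisj] at this
    rwa [Finset.offDiag_card, Finset.card_univ, Fintype.card_fin] at this
  have h2b : 2 * B.ncard ≤ N * N - N := by omega
  have hcompl : G.ncard + B.ncard = Fintype.card K := by
    rw [hBdef]
    rw [Set.ncard_add_ncard_compl]
    exact Nat.card_eq_fintype_card
  have hNN : N * N - N ≤ Fintype.card K - N := by
    have : N * N ≤ Fintype.card K := by nlinarith [sq_nonneg N]
    omega
  have hNpos : 1 ≤ Fintype.card K := Fintype.card_pos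
  have hNK : N ≤ Fintype.card K := by nlinarith
  omega
end

section
/- Let K be a field and n ≥ 2 a natural number. Let x : Fin (n²) → K be injective and a, b ∈ K, so that the n² points (x k, a · x k + b) are pairwise distinct and lie on a line. Then bivariate interpolation at these points is not always possible with maximum degree less than n: there exists a family of values z : Fin (n²) → K such that no bivariate polynomial p ∈ MvPolynomial (Fin 2) K with degreeOf 0 p < n and degreeOf 1 p < n satisfies eval ![x k, a · x k + b] p = z k for all k < n². -/
open MvPolynomial

theorem no_bivariate_interpolation_on_line
    {K : Type*} [Field K] (n : ℕ) (hn : 2 ≤ n)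
    (x : Fin (n ^ 2) → K) (hx : Function.Injective x) (a b : K) :
    ∃ z : Fin (n ^ 2) → K, ¬ ∃ p : MvPolynomial (Fin 2) K,
      degreeOf 0 p < n ∧ degreeOf 1 p < n ∧
      ∀ k : Fin (n ^ 2), eval ![x k, a * x k + b] p = z k := by
  classical
  have hn2 : 0 < n ^ 2 := by positivity
  set k0 : Fin (n ^ 2) := ⟨0, hn2⟩
  refine ⟨fun k => if k = k0 then 1 else 0, ?_⟩
  rintro ⟨p, h0, h1, hint⟩
  -- restrict p to the line
  set f : Fin 2 → Polynomial K := ![Polynomial.X, Polynomial.C a * Polynomial.X + Polynomial.C b]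
    with hf
  set q : Polynomial K := MvPolynomial.aeval f p with hq
  have hqeval : ∀ k : Fin (n ^ 2), q.eval (x k) = eval ![x k, a * x k + b] p := by
    intro k
    have h := MvPolynomial.comp_aeval_apply (R := K) (f := f)
      (Polynomial.aeval (x k) : Polynomial K →ₐ[K] K) p
    simp only [Polynomial.coe_aeval_eq_eval] at h
    rw [hq, h]
    have hfx : (fun i => Polynomial.eval (x k) (f i)) = ![x k, a * x k + b] := by
      funext i; fin_cases i <;> simp [hf]
    rw [hfx, MvPolynomial.aeval_def, Algebra.algebraMap_self]
    rfl
  -- total degree bound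
  have htot : p.totalDegree ≤ 2 * n - 2 := by
    apply Finset.sup_le
    intro d hd
    have hd0 : d 0 ≤ n - 1 := Nat.le_sub_one_of_lt <|
      (degreeOf_lt_iff (by omega)).mp h0 d hd
    have hd1 : d 1 ≤ n - 1 := Nat.le_sub_one_of_lt <|
      (degreeOf_lt_iff (by omega)).mp h1 d hd
    have : (d.sum fun _ e => e) = d 0 + d 1 := by
      rw [Finsupp.sum_fintype _ _ (fun _ => rfl), Fin.sum_univ_two]
    omega
  have hdegq : q.natDegree ≤ 2 * n - 2 := by
    have := MvPolynomial.aeval_natDegree_le (n := 1) p htot f (fun i => by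
      fin_cases i <;> simp [hf] <;> compute_degree)
    simpa using this
  -- q vanishes at the n^2 - 1 points x k, k ≠ k0
  have hq0 : q = 0 := by
    apply Polynomial.eq_zero_of_natDegree_lt_card_of_eval_eq_zero q
      (f := fun k : {k : Fin (n ^ 2) // k ≠ k0} => x k.1)
      (fun k l h => Subtype.ext (hx h))
      (fun k => by rw [hqeval, hint]; simp [k.2])
    have hcard : Fintype.card {k : Fin (n ^ 2) // k ≠ k0} = n ^ 2 - 1 := by
      simp [Fintype.card_subtype_compl]
    rw [hcard]
    have h2n : 2 * n ≤ n ^ 2 := by nlinarith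
    omega
  have hone : q.eval (x k0) = 1 := by rw [hqeval, hint]; simp
  rw [hq0] at hone
  simp at hone
end

section
/- Let R be a commutative ring, n ≥ 1 a natural number, and let p, q ∈ (R[X])[Y] be bivariate polynomials all of whose Y-coefficients have X-degree less than n (i.e., for all j, ((p.coeff j).degree < n) and ((q.coeff j).degree < n)). Let φ : (R[X])[Y] → R[X] denote the Kronecker substitution Y ↦ X^{2n−1}, i.e., φ(h) = Polynomial.eval (Polynomial.X ^ (2n−1)) h. Then the coefficients of the product p·q can be read off from the univariate product φ(p)·φ(q): for every j and every i < 2n−1, ((p*q).coeff j).coeff i = (φ p * φ q).coeff ((2n−1)·j + i). -/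
/-!
If every `Y`-coefficient of a bivariate polynomial `h` has `X`-degree less than `N`, then in
`h(X, X ^ N)` the term of `Y ^ k` occupies exactly the coefficients `N * k, …, N * k + N - 1`, so
these blocks do not overlap and the coefficients of `h` can be read off. Coefficients of `p * q`
have `X`-degree at most `2 * (n - 1)`, so this applies to `h = p * q` with `N = 2 * n - 1`, and
`φ (p * q) = φ p * φ q`.
-/

open Polynomial

namespace Polynomial

variable {R : Type*} [CommRing R]

theorem coeff_coeff_mul_eq_zero_of_degree_lt {p q : R[X][X]} {a b : ℕ}
    (hp : ∀ j, (p.coeff j).degree < a) (hq : ∀ j, (q.coeff j).degree < b)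
    (j : ℕ) {i : ℕ} (hi : a + b - 1 ≤ i) : ((p * q).coeff j).coeff i = 0 := by
  rw [coeff_mul, finsetSum_coeff]
  refine Finset.sum_eq_zero fun kl _ => ?_
  rw [coeff_mul]
  refine Finset.sum_eq_zero fun cd hcd => ?_
  rw [Finset.HasAntidiagonal.mem_antidiagonal] at hcd
  rcases le_or_gt a cd.1 with hc | hc
  · rw [coeff_eq_zero_of_degree_lt ((hp _).trans_le (by exact_mod_cast hc)), zero_mul]
  · rw [coeff_eq_zero_of_degree_lt ((hq _).trans_le (by exact_mod_cast (by omega : b ≤ cd.2))),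
      mul_zero]

theorem coeff_eval_X_pow_mul_add {h : R[X][X]} {N : ℕ} (hh : ∀ k, (h.coeff k).degree < N)
    (j : ℕ) {i : ℕ} (hi : i < N) : (h.eval (X ^ N)).coeff (N * j + i) = (h.coeff j).coeff i := by
  have block_eq_zero : ∀ k ≠ j, (h.coeff k * (X ^ N) ^ k).coeff (N * j + i) = 0 := by
    intro k hkj
    rw [← pow_mul, coeff_mul_X_pow']
    rcases lt_or_gt_of_ne hkj with hk | hk
    · have : N * k + N ≤ N * j := by simpa [Nat.mul_succ] using Nat.mul_le_mul_left N hk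
      rw [if_pos (by omega)]
      exact coeff_eq_zero_of_degree_lt ((hh k).trans_le (by exact_mod_cast (by omega)))
    · have : N * j + N ≤ N * k := by simpa [Nat.mul_succ] using Nat.mul_le_mul_left N hk
      rw [if_neg (by omega)]
  rw [eval_eq_sum, sum_def, finsetSum_coeff,
    Finset.sum_eq_single j (fun k _ hk => block_eq_zero k hk) (fun hj => by
      rw [notMem_support_iff.mp hj, zero_mul, coeff_zero]),
    ← pow_mul, coeff_mul_X_pow', if_pos (Nat.le_add_right _ _), Nat.add_sub_cancel_left]

end Polynomial

theorem kronecker_substitution_coeff_general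
    {R : Type*} [CommRing R] (n : ℕ)
    (p q : Polynomial (Polynomial R))
    (hp : ∀ j, (p.coeff j).degree < (n : ℕ))
    (hq : ∀ j, (q.coeff j).degree < (n : ℕ))
    (φ : Polynomial (Polynomial R) → Polynomial R)
    (hφ : ∀ h, φ h = Polynomial.eval ((Polynomial.X : Polynomial R) ^ (2 * n - 1)) h)
    (j i : ℕ) (hi : i < 2 * n - 1) :
    ((p * q).coeff j).coeff i = (φ p * φ q).coeff ((2 * n - 1) * j + i) := by
  have hpq : ∀ k, ((p * q).coeff k).degree < (2 * n - 1 : ℕ) := fun k =>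
    degree_lt_iff_coeff_zero _ _ |>.mpr fun m hm =>
      coeff_coeff_mul_eq_zero_of_degree_lt hp hq k (by omega)
  rw [hφ, hφ, ← eval_mul, coeff_eval_X_pow_mul_add hpq j hi]

theorem kronecker_substitution_coeff
    {R : Type*} [CommRing R] (n : ℕ) (hn : 1 ≤ n)
    (p q : Polynomial (Polynomial R))
    (hp : ∀ j, (p.coeff j).degree < (n : ℕ))
    (hq : ∀ j, (q.coeff j).degree < (n : ℕ))
    (φ : Polynomial (Polynomial R) → Polynomial R)
    (hφ : ∀ h, φ h = Polynomial.eval ((Polynomial.X : Polynomial R) ^ (2 * n - 1)) h)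
    (j i : ℕ) (hi : i < 2 * n - 1) :
    ((p * q).coeff j).coeff i = (φ p * φ q).coeff ((2 * n - 1) * j + i) :=
  kronecker_substitution_coeff_general n p q hp hq φ hφ j i hi
end
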